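/- Fix λ > 0 and a > 2. The SCAD penalty ρ : ℝ → ℝ defined by ρ(t) = λ|t| for |t| ≤ λ, ρ(t) = −(t² − 2aλ|t| + λ²)/(2(a−1)) for λ < |t| ≤ aλ, and ρ(t) = (a+1)λ²/2 for |t| > aλ, is (μ, γ)-amenable with μ = 1/(a−1) and γ = a. -/

import Mathlib

/-! On `(0, ∞)` the SCAD penalty is `C¹` and its derivative
`scadDeriv t = min λ (max ((aλ - t)/(a - 1)) 0)` is nonnegative and antitone, while
`scadDeriv t + t/(a - 1)` is monotone. Hence `ρ` is nondecreasing and concave on `[0, ∞)`, so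
`ρ(t)/t`, the slope of a chord through the origin, is nonincreasing; and `ρ + t²/(2(a - 1))` is
convex and nondecreasing on `[0, ∞)`, so its even extension is convex on `ℝ`. -/

/-- A function `ρ : ℝ → ℝ` is `μ`-amenable (with selection parameter `lam > 0`):
(i) symmetric around zero with `ρ 0 = 0`; (ii) nondecreasing on `[0, ∞)`;
(iii) `t ↦ ρ t / t` nonincreasing on `(0, ∞)`; (iv) differentiable away from `0`;
(v) `t ↦ ρ t + μ/2 t²` convex; (vi) `ρ'(t) → lam` as `t → 0⁺`. -/
structure Amenable (lam mu : ℝ) (ρ : ℝ → ℝ) : Prop where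
  symm : ∀ t : ℝ, ρ (-t) = ρ t
  zero : ρ 0 = 0
  mono : MonotoneOn ρ (Set.Ici (0 : ℝ))
  ratio : AntitoneOn (fun t => ρ t / t) (Set.Ioi (0 : ℝ))
  diff : ∀ t : ℝ, t ≠ 0 → DifferentiableAt ℝ ρ t
  conv : ConvexOn ℝ Set.univ (fun t => ρ t + mu / 2 * t ^ 2)
  deriv_lim : Filter.Tendsto (deriv ρ) (nhdsWithin 0 (Set.Ioi 0)) (nhds lam)


/-- `ρ` is `(μ, γ)`-amenable: `μ`-amenable and in addition `ρ'(t) = 0` for all `t ≥ γλ`. -/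
structure AmenableG (lam mu gam : ℝ) (ρ : ℝ → ℝ) extends Amenable lam mu ρ : Prop where
  gam_pos : 0 < gam
  unbiased : ∀ t : ℝ, gam * lam ≤ t → deriv ρ t = 0

/-- The SCAD penalty with parameters `λ > 0` and `a > 2`. -/
noncomputable def scad (lam a : ℝ) (t : ℝ) : ℝ :=
  if |t| ≤ lam then lam * |t|
  else if |t| ≤ a * lam then -(t ^ 2 - 2 * a * lam * |t| + lam ^ 2) / (2 * (a - 1))
  else (a + 1) * lam ^ 2 / 2

open Set Filter Topology

theorem HasDerivAt.of_eventuallyEq_nhdsLE_nhdsGE {f g h : ℝ → ℝ} {x d : ℝ}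
    (hg : HasDerivAt g d x) (hh : HasDerivAt h d x)
    (hfg : f =ᶠ[𝓝[≤] x] g) (hfh : f =ᶠ[𝓝[≥] x] h) : HasDerivAt f d x := by
  have hl := hg.hasDerivWithinAt.congr_of_eventuallyEq_of_mem hfg self_mem_Iic
  have hr := hh.hasDerivWithinAt.congr_of_eventuallyEq_of_mem hfh self_mem_Ici
  rw [← hasDerivWithinAt_univ, ← Iic_union_Ici]
  exact hl.union hr

theorem MonotoneOn.convexOn_of_hasDerivAt {D : Set ℝ} (hD : Convex ℝ D) {f f' : ℝ → ℝ}
    (hf : ContinuousOn f D) (hf' : ∀ x ∈ interior D, HasDerivAt f (f' x) x)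
    (hmono : MonotoneOn f' (interior D)) : ConvexOn ℝ D f :=
  (hmono.congr fun x hx => (hf' x hx).deriv.symm).convexOn_of_deriv hD hf
    fun x hx => (hf' x hx).differentiableAt.differentiableWithinAt

theorem AntitoneOn.concaveOn_of_hasDerivAt {D : Set ℝ} (hD : Convex ℝ D) {f f' : ℝ → ℝ}
    (hf : ContinuousOn f D) (hf' : ∀ x ∈ interior D, HasDerivAt f (f' x) x)
    (hanti : AntitoneOn f' (interior D)) : ConcaveOn ℝ D f :=
  (hanti.congr fun x hx => (hf' x hx).deriv.symm).concaveOn_of_deriv hD hf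
    fun x hx => (hf' x hx).differentiableAt.differentiableWithinAt

theorem ConcaveOn.antitoneOn_div_self {𝕜 : Type*} [Field 𝕜] [LinearOrder 𝕜]
    [IsStrictOrderedRing 𝕜] {f : 𝕜 → 𝕜} (hf : ConcaveOn 𝕜 (Ici 0) f) (h0 : f 0 = 0) :
    AntitoneOn (fun t => f t / t) (Ioi 0) := by
  intro x hx y hy hxy
  have := hf.antitoneOn_slope_gt self_mem_Ici ⟨le_of_lt hx, hx⟩ ⟨le_of_lt hy, hy⟩ hxy
  simpa only [slope_def_field, h0, sub_zero] using this

theorem ConvexOn.comp_abs {g : ℝ → ℝ} (hconv : ConvexOn ℝ (Ici 0) g)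
    (hmono : MonotoneOn g (Ici 0)) : ConvexOn ℝ univ (fun t => g |t|) := by
  have himage : (fun t : ℝ => |t|) '' univ = Ici 0 := by
    ext x
    exact ⟨fun ⟨y, _, hy⟩ => hy ▸ abs_nonneg y, fun hx => ⟨x, trivial, abs_of_nonneg hx⟩⟩
  rw [← himage] at hconv hmono
  exact hconv.comp (convexOn_univ_norm (E := ℝ)) hmono

section Scad

variable {lam a : ℝ}

noncomputable def scadQuad (lam a s : ℝ) : ℝ := -(s ^ 2 - 2 * a * lam * s + lam ^ 2) / (2 * (a - 1))

noncomputable def scadDeriv (lam a t : ℝ) : ℝ := min lam (max ((a * lam - t) / (a - 1)) 0)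

theorem scad_neg (t : ℝ) : scad lam a (-t) = scad lam a t := by
  simp [scad]

theorem scad_abs (t : ℝ) : scad lam a |t| = scad lam a t := by
  simp [scad, sq_abs]

theorem scad_of_abs_le {t : ℝ} (ht : |t| ≤ lam) : scad lam a t = lam * |t| := by
  simp [scad, ht]

theorem scad_eqOn_Icc (hlam : 0 < lam) (ha : 1 < a) :
    EqOn (scad lam a) (scadQuad lam a) (Icc lam (a * lam)) := by
  rintro t ⟨h1, h2⟩
  have habs : |t| = t := abs_of_pos (hlam.trans_le h1)
  rcases h1.eq_or_lt with rfl | h1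
  · rw [scad_of_abs_le habs.le, habs, scadQuad]
    field_simp [(sub_pos.2 ha).ne']
    ring
  · rw [scad, if_neg (by rw [habs]; exact h1.not_ge), if_pos (by rw [habs]; exact h2), habs,
      scadQuad]

theorem scad_eqOn_Ici (hlam : 0 < lam) (ha : 1 < a) :
    EqOn (scad lam a) (fun _ => (a + 1) * lam ^ 2 / 2) (Ici (a * lam)) := by
  intro t (ht : a * lam ≤ t)
  have hlt : lam < a * lam := lt_mul_left hlam ha
  rcases ht.eq_or_lt with rfl | ht
  · rw [scad_eqOn_Icc hlam ha ⟨hlt.le, le_rfl⟩, scadQuad]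
    field_simp [(sub_pos.2 ha).ne']
    ring
  · have habs : |t| = t := abs_of_pos (hlam.trans (hlt.trans ht))
    rw [scad, if_neg (by rw [habs]; linarith), if_neg (by rw [habs]; exact ht.not_ge)]

theorem hasDerivAt_scadQuad (ha : a ≠ 1) (t : ℝ) :
    HasDerivAt (scadQuad lam a) ((a * lam - t) / (a - 1)) t := by
  have hsq : HasDerivAt (fun s => s ^ 2) (2 * t) t := by simpa using hasDerivAt_pow 2 t
  refine (((hsq.sub ((hasDerivAt_id t).const_mul (2 * a * lam))).add_const (lam ^ 2)).neg.div_const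
    (2 * (a - 1))).congr_deriv ?_
  field_simp [sub_ne_zero.2 ha]
  ring

theorem scadDeriv_of_le (ha : 1 < a) {t : ℝ} (ht : t ≤ lam) : scadDeriv lam a t = lam := by
  refine min_eq_left (le_trans ?_ (le_max_left _ _))
  rw [le_div_iff₀ (sub_pos.2 ha)]
  linarith

theorem scadDeriv_of_mem_Icc (ha : 1 < a) {t : ℝ} (ht : t ∈ Icc lam (a * lam)) :
    scadDeriv lam a t = (a * lam - t) / (a - 1) := by
  have hpos := sub_pos.2 ha
  rw [scadDeriv, max_eq_left (div_nonneg (by linarith [ht.2]) hpos.le), min_eq_right]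
  rw [div_le_iff₀ hpos]
  linarith [ht.1]

theorem scadDeriv_of_ge (hlam : 0 ≤ lam) (ha : 1 < a) {t : ℝ} (ht : a * lam ≤ t) :
    scadDeriv lam a t = 0 := by
  rw [scadDeriv, max_eq_right (div_nonpos_of_nonpos_of_nonneg (by linarith) (by linarith)),
    min_eq_right hlam]

theorem scadDeriv_nonneg (hlam : 0 ≤ lam) (t : ℝ) : 0 ≤ scadDeriv lam a t :=
  le_min hlam (le_max_right _ _)

theorem scadDeriv_antitone (ha : 1 < a) : Antitone (scadDeriv lam a) := by
  intro x y hxy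
  have := sub_pos.2 ha
  unfold scadDeriv
  gcongr

theorem monotone_scadDeriv_add_div (ha : 1 < a) :
    Monotone fun t => scadDeriv lam a t + t / (a - 1) := by
  have hpos := sub_pos.2 ha
  have hform : ∀ t, scadDeriv lam a t + t / (a - 1) =
      min (lam + t / (a - 1)) (max (a * lam / (a - 1)) (t / (a - 1))) := by
    intro t
    rw [scadDeriv, ← min_add_add_right, ← max_add_add_right, zero_add, ← add_div,
      sub_add_cancel]
  intro x y hxy
  simp only [hform]
  gcongr

theorem scad_hasDerivAt (hlam : 0 < lam) (ha : 1 < a) {t : ℝ} (ht : 0 < t) :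
    HasDerivAt (scad lam a) (scadDeriv lam a t) t := by
  have hlt : lam < a * lam := lt_mul_left hlam ha
  have hlin : HasDerivAt (fun s => lam * s) lam t := by
    simpa using (hasDerivAt_id t).const_mul lam
  have hconst := hasDerivAt_const t ((a + 1) * lam ^ 2 / 2)
  have hquad := hasDerivAt_scadQuad (lam := lam) (ne_of_gt ha) t
  have eq_lin : EqOn (scad lam a) (fun s => lam * s) (Ioc 0 lam) := fun s hs => by
    rw [scad_of_abs_le (by rw [abs_of_pos hs.1]; exact hs.2), abs_of_pos hs.1]
  have eq_quad := scad_eqOn_Icc hlam ha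
  have eq_const := scad_eqOn_Ici hlam ha
  rcases lt_trichotomy t lam with h | rfl | h
  · rw [scadDeriv_of_le ha h.le]
    exact hlin.congr_of_eventuallyEq (eq_lin.eventuallyEq_of_mem (Ioc_mem_nhds ht h))
  · rw [scadDeriv_of_le ha le_rfl]
    rw [show (a * t - t) / (a - 1) = t by field_simp [(sub_pos.2 ha).ne']] at hquad
    exact hlin.of_eventuallyEq_nhdsLE_nhdsGE hquad
      (eq_lin.eventuallyEq_of_mem (Ioc_mem_nhdsLE ht))
      (eq_quad.eventuallyEq_of_mem (Icc_mem_nhdsGE hlt))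
  rcases lt_trichotomy t (a * lam) with h' | rfl | h'
  · rw [scadDeriv_of_mem_Icc ha ⟨h.le, h'.le⟩]
    exact hquad.congr_of_eventuallyEq (eq_quad.eventuallyEq_of_mem (Icc_mem_nhds h h'))
  · rw [scadDeriv_of_ge hlam.le ha le_rfl]
    rw [sub_self, zero_div] at hquad
    exact hquad.of_eventuallyEq_nhdsLE_nhdsGE hconst
      (eq_quad.eventuallyEq_of_mem (Icc_mem_nhdsLE hlt))
      (eq_const.eventuallyEq_of_mem self_mem_nhdsWithin)
  · rw [scadDeriv_of_ge hlam.le ha h'.le]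
    exact hconst.congr_of_eventuallyEq (eq_const.eventuallyEq_of_mem (Ici_mem_nhds h'))

theorem scad_differentiableAt (hlam : 0 < lam) (ha : 1 < a) {t : ℝ} (ht : t ≠ 0) :
    DifferentiableAt ℝ (scad lam a) t := by
  rcases ht.lt_or_gt with ht | ht
  · have h := differentiableAt_comp_neg.2 (scad_hasDerivAt hlam ha (neg_pos.2 ht)).differentiableAt
    simpa only [scad_neg, neg_neg] using h
  · exact (scad_hasDerivAt hlam ha ht).differentiableAt

theorem scad_continuous (hlam : 0 < lam) (ha : 1 < a) : Continuous (scad lam a) := by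
  refine continuous_iff_continuousAt.2 fun t => ?_
  rcases eq_or_ne t 0 with rfl | ht
  · refine (by fun_prop : Continuous fun s : ℝ => lam * |s|).continuousAt.congr ?_
    filter_upwards [Ioo_mem_nhds (neg_neg_of_pos hlam) hlam] with s hs
    exact (scad_of_abs_le (abs_le.2 ⟨hs.1.le, hs.2.le⟩)).symm
  · exact (scad_differentiableAt hlam ha ht).continuousAt

theorem scad_monotoneOn (hlam : 0 < lam) (ha : 1 < a) : MonotoneOn (scad lam a) (Ici 0) :=
  monotoneOn_of_hasDerivWithinAt_nonneg (convex_Ici 0) (scad_continuous hlam ha).continuousOn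
    (by rw [interior_Ici]; exact fun t ht => (scad_hasDerivAt hlam ha ht).hasDerivWithinAt)
    fun t _ => scadDeriv_nonneg hlam.le t

theorem scad_concaveOn (hlam : 0 < lam) (ha : 1 < a) : ConcaveOn ℝ (Ici 0) (scad lam a) :=
  ((scadDeriv_antitone ha).antitoneOn _).concaveOn_of_hasDerivAt (convex_Ici 0)
    (scad_continuous hlam ha).continuousOn
    (by rw [interior_Ici]; exact fun t ht => scad_hasDerivAt hlam ha ht)

theorem scad_add_sq_convexOn (hlam : 0 < lam) (ha : 1 < a) :
    ConvexOn ℝ univ fun t => scad lam a t + 1 / (a - 1) / 2 * t ^ 2 := by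
  set g : ℝ → ℝ := fun t => scad lam a t + 1 / (a - 1) / 2 * t ^ 2
  have hg' : ∀ t ∈ interior (Ici (0 : ℝ)), HasDerivAt g (scadDeriv lam a t + t / (a - 1)) t := by
    rw [interior_Ici]
    intro t ht
    refine (scad_hasDerivAt hlam ha ht).add ?_
    have hsq : HasDerivAt (fun s => s ^ 2) (2 * t) t := by simpa using hasDerivAt_pow 2 t
    refine (hsq.const_mul (1 / (a - 1) / 2)).congr_deriv ?_
    field_simp
  have hcont : ContinuousOn g (Ici 0) :=
    ((scad_continuous hlam ha).add (by fun_prop)).continuousOn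
  have hmono : MonotoneOn g (Ici 0) :=
    monotoneOn_of_hasDerivWithinAt_nonneg (convex_Ici 0) hcont
      (fun t ht => (hg' t ht).hasDerivWithinAt)
      fun t ht => add_nonneg (scadDeriv_nonneg hlam.le t)
        (div_nonneg (interior_subset ht) (sub_pos.2 ha).le)
  have hconv : ConvexOn ℝ (Ici 0) g :=
    ((monotone_scadDeriv_add_div ha).monotoneOn _).convexOn_of_hasDerivAt (convex_Ici 0) hcont hg'
  simpa only [g, scad_abs, sq_abs] using hconv.comp_abs hmono

end Scad

theorem scad_amenable (lam a : ℝ) (hlam : 0 < lam) (ha : 2 < a) :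
    AmenableG lam (1 / (a - 1)) a (scad lam a) := by
  have ha1 : 1 < a := by linarith
  have hzero : scad lam a 0 = 0 := by simp [scad, hlam.le]
  have hderiv : ∀ t, 0 < t → deriv (scad lam a) t = scadDeriv lam a t :=
    fun t ht => (scad_hasDerivAt hlam ha1 ht).deriv
  refine
    { symm := scad_neg
      zero := hzero
      mono := scad_monotoneOn hlam ha1
      ratio := (scad_concaveOn hlam ha1).antitoneOn_div_self hzero
      diff := fun t ht => scad_differentiableAt hlam ha1 ht
      conv := scad_add_sq_convexOn hlam ha1
      deriv_lim := tendsto_const_nhds.congr' ?_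
      gam_pos := by linarith
      unbiased := fun t ht => ?_ }
  · filter_upwards [Ioo_mem_nhdsGT hlam] with t ht
    rw [hderiv t ht.1, scadDeriv_of_le ha1 ht.2.le]
  · rw [hderiv t (by nlinarith), scadDeriv_of_ge hlam.le ha1 ht]
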